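/- Let P, Q, R, S be A-bounded operators on H. Then ω_𝔸([[P,Q],[R,S]]) ≤ max{ω_A(P), ω_A(S)} + (‖Q‖_A + ‖R‖_A)/2, where ‖T‖_A = sup{‖Tx‖_A : ‖x‖_A = 1}. -/

import Mathlib

/-
Write `x = (u, v)` with `a = ‖u‖_A`, `b = ‖v‖_A`, so that `‖x‖_𝔸² = a² + b²`. Expanding
`⟨𝔸 T x, x⟩` for `T = [[P, Q], [R, S]]` into its four entries, the diagonal ones are bounded
by `ω_A(P) a²` and `ω_A(S) b²`, and by Cauchy–Schwarz for the semi-inner product `⟨A·, ·⟩` the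
off-diagonal ones by `‖Q‖_A a b` and `‖R‖_A a b`. Since `a b ≤ (a² + b²)/2`, the bound follows
on the `𝔸`-unit sphere.
-/

open ContinuousLinearMap

/-- The `A`-seminorm of a vector: `‖x‖_A = √⟨Ax, x⟩`. -/
noncomputable def vnormA {H : Type*} [NormedAddCommGroup H] [InnerProductSpace ℂ H]
    (A : H →L[ℂ] H) (x : H) : ℝ :=
  Real.sqrt (RCLike.re (inner ℂ (A x) x : ℂ))

/-- `T` is `A`-bounded, i.e. `T ∈ B_{A^{1/2}}(H)`. -/
def ABounded {H : Type*} [NormedAddCommGroup H] [InnerProductSpace ℂ H]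
    (A T : H →L[ℂ] H) : Prop :=
  ∃ c : ℝ, 0 < c ∧ ∀ x, vnormA A (T x) ≤ c * vnormA A x

/-- The `A`-operator seminorm `‖T‖_A = sup{‖Tx‖_A : ‖x‖_A = 1}`. -/
noncomputable def opNormA {H : Type*} [NormedAddCommGroup H] [InnerProductSpace ℂ H]
    (A T : H →L[ℂ] H) : ℝ :=
  sSup {c : ℝ | ∃ x : H, vnormA A x = 1 ∧ c = vnormA A (T x)}

/-- The `A`-numerical radius `ω_A(T) = sup{|⟨ATx, x⟩| : ‖x‖_A = 1}`. -/
noncomputable def wA {H : Type*} [NormedAddCommGroup H] [InnerProductSpace ℂ H]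
    (A T : H →L[ℂ] H) : ℝ :=
  sSup {c : ℝ | ∃ x : H, vnormA A x = 1 ∧ c = ‖(inner ℂ (A (T x)) x : ℂ)‖}

/-- `Ts` is the reduced (Douglas) solution of `AX = T*A`, i.e. `Ts = T^{♯_A}`. -/
def IsReducedAdjoint {H : Type*} [NormedAddCommGroup H] [InnerProductSpace ℂ H]
    [CompleteSpace H] (A T Ts : H →L[ℂ] H) : Prop :=
  A ∘L Ts = (ContinuousLinearMap.adjoint T) ∘L A ∧
    ∀ y, Ts y ∈ closure (Set.range A)

/-- The `2 × 2` operator matrix `[[P, Q], [R, S]]` acting on `H ⊕ H` (with the `ℓ²` product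
inner product). -/
noncomputable def blk {H : Type*} [NormedAddCommGroup H] [InnerProductSpace ℂ H]
    (P Q R S : H →L[ℂ] H) : WithLp 2 (H × H) →L[ℂ] WithLp 2 (H × H) :=
  letI e := (WithLp.prodContinuousLinearEquiv 2 ℂ H H)
  (e.symm.toContinuousLinearMap) ∘L
    ((P.comp (fst ℂ H H) + Q.comp (snd ℂ H H)).prod
      (R.comp (fst ℂ H H) + S.comp (snd ℂ H H))) ∘L
    (e.toContinuousLinearMap)

/-- `𝔸 = diag(A, A)` on `H ⊕ H`. -/
noncomputable def AA {H : Type*} [NormedAddCommGroup H] [InnerProductSpace ℂ H]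
    (A : H →L[ℂ] H) : WithLp 2 (H × H) →L[ℂ] WithLp 2 (H × H) :=
  blk A 0 0 A

section SemiInner

variable {H : Type*} [NormedAddCommGroup H] [InnerProductSpace ℂ H] (A : H →L[ℂ] H)

/-- Its norm is `vnormA A` definitionally, so it yields Cauchy–Schwarz for `⟨A·, ·⟩`. -/
noncomputable abbrev ContinuousLinearMap.IsPositive.semiInnerCore {A : H →L[ℂ] H}
    (hA : A.IsPositive) : PreInnerProductSpace.Core ℂ H where
  inner x y := inner ℂ (A x) y
  conj_inner_symm x y := by
    rw [inner_conj_symm]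
    exact (hA.inner_left_eq_inner_right x y).symm
  re_inner_nonneg := hA.re_inner_nonneg_left
  add_left x y z := by simp only [map_add, inner_add_left]
  smul_left x y r := by simp only [map_smul, inner_smul_left]

lemma vnormA_nonneg (x : H) : 0 ≤ vnormA A x := Real.sqrt_nonneg _

lemma vnormA_sq {A : H →L[ℂ] H} (hA : A.IsPositive) (x : H) :
    vnormA A x ^ 2 = RCLike.re (inner ℂ (A x) x) :=
  Real.sq_sqrt (hA.re_inner_nonneg_left x)

lemma norm_inner_le_vnormA_mul_vnormA {A : H →L[ℂ] H} (hA : A.IsPositive) (x y : H) :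
    ‖inner ℂ (A x) y‖ ≤ vnormA A x * vnormA A y :=
  InnerProductSpace.Core.norm_inner_le_norm (c := hA.semiInnerCore) x y

lemma vnormA_ofReal_smul (t : ℝ) (x : H) : vnormA A ((t : ℂ) • x) = |t| * vnormA A x := by
  have h : inner ℂ (A ((t : ℂ) • x)) ((t : ℂ) • x) = ((t ^ 2 : ℝ) : ℂ) * inner ℂ (A x) x := by
    rw [map_smul, inner_smul_left, inner_smul_right, Complex.conj_ofReal]
    push_cast
    ring
  rw [vnormA, vnormA, h, RCLike.re_to_complex, Complex.re_ofReal_mul,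
    Real.sqrt_mul (sq_nonneg t), Real.sqrt_sq_eq_abs]
  rfl

lemma le_sSup_unitSphereA_mul_vnormA_pow {g : H → ℝ} {n : ℕ} (hn : n ≠ 0)
    (hg : ∀ (t : ℝ) x, g ((t : ℂ) • x) = |t| ^ n * g x)
    (hC : ∃ C, ∀ x, g x ≤ C * vnormA A x ^ n) (u : H) :
    g u ≤ sSup {c | ∃ x, vnormA A x = 1 ∧ c = g x} * vnormA A u ^ n := by
  obtain ⟨C, hC⟩ := hC
  rcases (vnormA_nonneg A u).eq_or_lt' with hu | hu
  · simpa [hu, hn] using hC u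
  have hbdd : BddAbove {c | ∃ x, vnormA A x = 1 ∧ c = g x} :=
    ⟨C, by rintro _ ⟨x, hx, rfl⟩; simpa [hx] using hC x⟩
  set a := vnormA A u
  have hunit : vnormA A (((a⁻¹ : ℝ) : ℂ) • u) = 1 := by
    rw [vnormA_ofReal_smul, abs_of_pos (inv_pos.mpr hu), inv_mul_cancel₀ hu.ne']
  have hle := le_csSup hbdd ⟨_, hunit, rfl⟩
  rw [hg, abs_of_pos (inv_pos.mpr hu), inv_pow] at hle
  calc g u = (a ^ n)⁻¹ * g u * a ^ n := by field_simp
    _ ≤ _ := by gcongr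

lemma norm_inner_le_wA_mul_vnormA_sq {A T : H →L[ℂ] H} (hA : A.IsPositive) (hT : ABounded A T)
    (u : H) : ‖inner ℂ (A (T u)) u‖ ≤ wA A T * vnormA A u ^ 2 := by
  refine le_sSup_unitSphereA_mul_vnormA_pow A (g := fun x => ‖inner ℂ (A (T x)) x‖) two_ne_zero
    (fun t x => ?_) ?_ u
  · rw [map_smul, map_smul, inner_smul_left, inner_smul_right, Complex.conj_ofReal, ← mul_assoc,
      norm_mul, norm_mul, Complex.norm_real, Real.norm_eq_abs]
    ring
  · obtain ⟨c, -, hc⟩ := hT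
    refine ⟨c, fun x => ?_⟩
    calc ‖inner ℂ (A (T x)) x‖ ≤ vnormA A (T x) * vnormA A x :=
          norm_inner_le_vnormA_mul_vnormA hA _ _
      _ ≤ c * vnormA A x * vnormA A x := by gcongr; exacts [vnormA_nonneg A x, hc x]
      _ = c * vnormA A x ^ 2 := by ring

lemma vnormA_apply_le_opNormA_mul {T : H →L[ℂ] H} (hT : ABounded A T) (u : H) :
    vnormA A (T u) ≤ opNormA A T * vnormA A u := by
  obtain ⟨c, -, hc⟩ := hT
  rw [← pow_one (vnormA A u)]
  exact le_sSup_unitSphereA_mul_vnormA_pow A (g := fun x => vnormA A (T x)) one_ne_zero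
    (fun t x => by simp only [map_smul, vnormA_ofReal_smul, pow_one])
    ⟨c, by simpa only [pow_one] using hc⟩ u

lemma wA_nonneg (T : H →L[ℂ] H) : 0 ≤ wA A T :=
  Real.sSup_nonneg <| by rintro _ ⟨x, -, rfl⟩; exact norm_nonneg _

lemma opNormA_nonneg (T : H →L[ℂ] H) : 0 ≤ opNormA A T :=
  Real.sSup_nonneg <| by rintro _ ⟨x, -, rfl⟩; exact vnormA_nonneg A _

end SemiInner

lemma WithLp.inner_prod_eq {𝕜 E F : Type*} [RCLike 𝕜] [NormedAddCommGroup E]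
    [InnerProductSpace 𝕜 E] [NormedAddCommGroup F] [InnerProductSpace 𝕜 F]
    (x y : WithLp 2 (E × F)) : inner 𝕜 x y = inner 𝕜 x.fst y.fst + inner 𝕜 x.snd y.snd := rfl

section OperatorMatrix

variable {H : Type*} [NormedAddCommGroup H] [InnerProductSpace ℂ H]

@[simp] lemma blk_apply_fst (P Q R S : H →L[ℂ] H) (x : WithLp 2 (H × H)) :
    (blk P Q R S x).fst = P x.fst + Q x.snd := rfl

@[simp] lemma blk_apply_snd (P Q R S : H →L[ℂ] H) (x : WithLp 2 (H × H)) :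
    (blk P Q R S x).snd = R x.fst + S x.snd := rfl

lemma inner_AA_blk_apply (A P Q R S : H →L[ℂ] H) (x : WithLp 2 (H × H)) :
    inner ℂ (AA A (blk P Q R S x)) x =
      inner ℂ (A (P x.fst)) x.fst + inner ℂ (A (Q x.snd)) x.fst +
        inner ℂ (A (R x.fst)) x.snd + inner ℂ (A (S x.snd)) x.snd := by
  simp only [WithLp.inner_prod_eq, AA, blk_apply_fst, blk_apply_snd, zero_apply, add_zero,
    zero_add, map_add, inner_add_left]
  ring

lemma vnormA_AA_sq {A : H →L[ℂ] H} (hA : A.IsPositive) (x : WithLp 2 (H × H)) :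
    vnormA (AA A) x ^ 2 = vnormA A x.fst ^ 2 + vnormA A x.snd ^ 2 := by
  have h : inner ℂ (AA A x) x = inner ℂ (A x.fst) x.fst + inner ℂ (A x.snd) x.snd := by
    simp only [WithLp.inner_prod_eq, AA, blk_apply_fst, blk_apply_snd, zero_apply, add_zero,
      zero_add]
  rw [vnormA_sq hA, vnormA_sq hA, vnormA, h, map_add, Real.sq_sqrt]
  exact add_nonneg (hA.re_inner_nonneg_left _) (hA.re_inner_nonneg_left _)

lemma norm_inner_AA_blk_le {A P Q R S : H →L[ℂ] H} (hA : A.IsPositive) (hP : ABounded A P)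
    (hQ : ABounded A Q) (hR : ABounded A R) (hS : ABounded A S) (x : WithLp 2 (H × H)) :
    ‖inner ℂ (AA A (blk P Q R S x)) x‖ ≤
      (max (wA A P) (wA A S) + (opNormA A Q + opNormA A R) / 2) * vnormA (AA A) x ^ 2 := by
  set u := x.fst
  set v := x.snd
  set a := vnormA A u
  set b := vnormA A v
  have ha : 0 ≤ a := vnormA_nonneg A u
  have hb : 0 ≤ b := vnormA_nonneg A v
  have hdiag : ‖inner ℂ (A (P u)) u‖ + ‖inner ℂ (A (S v)) v‖ ≤
      max (wA A P) (wA A S) * (a ^ 2 + b ^ 2) := by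
    have hPu := norm_inner_le_wA_mul_vnormA_sq hA hP u
    have hSv := norm_inner_le_wA_mul_vnormA_sq hA hS v
    have hPmax := mul_le_mul_of_nonneg_right (le_max_left (wA A P) (wA A S)) (sq_nonneg a)
    have hSmax := mul_le_mul_of_nonneg_right (le_max_right (wA A P) (wA A S)) (sq_nonneg b)
    linarith
  have hoff : ‖inner ℂ (A (Q v)) u‖ + ‖inner ℂ (A (R u)) v‖ ≤
      (opNormA A Q + opNormA A R) * (a * b) := by
    have hQv := (norm_inner_le_vnormA_mul_vnormA hA (Q v) u).trans
      (mul_le_mul_of_nonneg_right (vnormA_apply_le_opNormA_mul A hQ v) ha)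
    have hRu := (norm_inner_le_vnormA_mul_vnormA hA (R u) v).trans
      (mul_le_mul_of_nonneg_right (vnormA_apply_le_opNormA_mul A hR u) hb)
    linarith
  have hab : a * b ≤ (a ^ 2 + b ^ 2) / 2 := by nlinarith [sq_nonneg (a - b)]
  have hQR : 0 ≤ opNormA A Q + opNormA A R :=
    add_nonneg (opNormA_nonneg A Q) (opNormA_nonneg A R)
  calc ‖inner ℂ (AA A (blk P Q R S x)) x‖
      ≤ ‖inner ℂ (A (P u)) u‖ + ‖inner ℂ (A (Q v)) u‖ + ‖inner ℂ (A (R u)) v‖ +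
          ‖inner ℂ (A (S v)) v‖ := by
        rw [inner_AA_blk_apply]
        exact norm_add₄_le
    _ ≤ max (wA A P) (wA A S) * (a ^ 2 + b ^ 2) + (opNormA A Q + opNormA A R) * (a * b) := by
        linarith
    _ ≤ max (wA A P) (wA A S) * (a ^ 2 + b ^ 2) +
          (opNormA A Q + opNormA A R) * ((a ^ 2 + b ^ 2) / 2) := by gcongr
    _ = _ := by rw [vnormA_AA_sq hA]; ring

end OperatorMatrix

theorem stmt3_general {H : Type*} [NormedAddCommGroup H] [InnerProductSpace ℂ H]
    (A : H →L[ℂ] H) (hA : A.IsPositive)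
    (P Q R S : H →L[ℂ] H) (hP : ABounded A P) (hQ : ABounded A Q)
    (hR : ABounded A R) (hS : ABounded A S) :
    wA (AA A) (blk P Q R S) ≤
      max (wA A P) (wA A S) + (opNormA A Q + opNormA A R) / 2 := by
  refine Real.sSup_le ?_ ?_
  · rintro _ ⟨x, hx, rfl⟩
    simpa [hx] using norm_inner_AA_blk_le hA hP hQ hR hS x
  · exact add_nonneg ((wA_nonneg A P).trans (le_max_left _ _))
      (div_nonneg (add_nonneg (opNormA_nonneg A Q) (opNormA_nonneg A R)) zero_le_two)

theorem stmt3 {H : Type*} [NormedAddCommGroup H] [InnerProductSpace ℂ H] [CompleteSpace H]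
    (A : H →L[ℂ] H) (hA : A.IsPositive)
    (P Q R S : H →L[ℂ] H) (hP : ABounded A P) (hQ : ABounded A Q)
    (hR : ABounded A R) (hS : ABounded A S) :
    wA (AA A) (blk P Q R S) ≤
      max (wA A P) (wA A S) + (opNormA A Q + opNormA A R) / 2 :=
  stmt3_general A hA P Q R S hP hQ hR hS
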